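/- Frame axioms add no inexecutabilities modulo the implicit ones: let FRA_a = {¬l → [a]¬l : a ⇝̸ l} and let IMPI_a be the set of all formulas (⋀antecedents(Ê) ∧ ¬χ) → [a]⊥ for Ê ⊆ E_a, χ ∈ NewCons(S, ⋀consequents(Ê)) with all literals of χ independent of a (a ⇝̸ l for each l ∈ χ) and S ∪ {⋀antecedents(Ê), ¬χ} consistent. Then S, E_a, I_a, IMPI_a, FRA_a ⊨_K A → [a]⊥ implies S, E_a, I_a, IMPI_a ⊨_K A → [a]⊥. -/

import Mathlib

/-! Classical propositional formulas. -/
inductive PForm (α : Type) : Type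
  | atom : α → PForm α
  | fls  : PForm α
  | not  : PForm α → PForm α
  | and  : PForm α → PForm α → PForm α
  | or   : PForm α → PForm α → PForm α
  | imp  : PForm α → PForm α → PForm α

def PForm.Sat {α : Type} (v : α → Prop) : PForm α → Prop
  | atom p => v p
  | fls => False
  | not φ => ¬ Sat v φ
  | and φ ψ => Sat v φ ∧ Sat v ψ
  | or φ ψ => Sat v φ ∨ Sat v ψ
  | imp φ ψ => Sat v φ → Sat v ψ

/-- Classical (propositional) global consequence. -/
def EntailsCl {α : Type} (Γ : Set (PForm α)) (φ : PForm α) : Prop :=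
  ∀ v : α → Prop, (∀ ψ ∈ Γ, PForm.Sat v ψ) → PForm.Sat v φ

/-- Multimodal formulas with one box per action. -/
inductive MForm (Act α : Type) : Type
  | atom : α → MForm Act α
  | fls  : MForm Act α
  | not  : MForm Act α → MForm Act α
  | and  : MForm Act α → MForm Act α → MForm Act α
  | or   : MForm Act α → MForm Act α → MForm Act α
  | imp  : MForm Act α → MForm Act α → MForm Act α
  | box  : Act → MForm Act α → MForm Act α

def PForm.toM {Act α : Type} : PForm α → MForm Act α
  | .atom p => .atom p
  | .fls => .fls
  | .not φ => .not φ.toM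
  | .and φ ψ => .and φ.toM ψ.toM
  | .or φ ψ => .or φ.toM ψ.toM
  | .imp φ ψ => .imp φ.toM ψ.toM

/-- A Kripke model for multimodal K. -/
structure KModel (Act α : Type) where
  W : Type
  R : Act → W → W → Prop
  V : W → α → Prop

def MForm.Sat {Act α : Type} (M : KModel Act α) : M.W → MForm Act α → Prop
  | w, atom p => M.V w p
  | _, fls => False
  | w, not φ => ¬ Sat M w φ
  | w, and φ ψ => Sat M w φ ∧ Sat M w ψ
  | w, or φ ψ => Sat M w φ ∨ Sat M w ψ
  | w, imp φ ψ => Sat M w φ → Sat M w ψ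
  | w, box a φ => ∀ w', M.R a w w' → Sat M w' φ

/-- Global truth in a model. -/
def Glob {Act α : Type} (M : KModel Act α) (Φ : MForm Act α) : Prop :=
  ∀ w : M.W, MForm.Sat M w Φ

/-- Global consequence in multimodal K. -/
def ConsK {Act α : Type} (Γ : Set (MForm Act α)) (Φ : MForm Act α) : Prop :=
  ∀ M : KModel Act α, (∀ Ψ ∈ Γ, Glob M Ψ) → Glob M Φ

/-- Literals. -/
abbrev Lit (α : Type) := α × Bool

def Lit.Sat {α : Type} (v : α → Prop) (l : Lit α) : Prop :=
  if l.2 then v l.1 else ¬ v l.1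

/-- A dependence relation `⇝ ⊆ Act × Lit`. -/
abbrev Dep (Act α : Type) := Act → Lit α → Prop

/-- `⇝`-models: along `R a`, literals independent of `a` persist. -/
def IsDepModel {Act α : Type} (dep : Dep Act α) (M : KModel Act α) : Prop :=
  ∀ (a : Act) (w w' : M.W), M.R a w w' → ∀ p : α,
    (¬ dep a (p, true) → ¬ M.V w p → ¬ M.V w' p) ∧
    (¬ dep a (p, false) → M.V w p → M.V w' p)

/-- Dependence-based global consequence. -/
def ConsDep {Act α : Type} (dep : Dep Act α) (Γ : Set (MForm Act α)) (Φ : MForm Act α) : Prop :=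
  ∀ M : KModel Act α, IsDepModel dep M → (∀ Ψ ∈ Γ, Glob M Ψ) → Glob M Φ

/-- An action theory: static laws `S`, effect laws `E` (antecedent/consequent
pairs), executability laws `X` (antecedents), inexecutability laws `I`
(antecedents). -/
structure ActionTheory (Act α : Type) where
  S : Set (PForm α)
  E : Act → Set (PForm α × PForm α)
  X : Act → Set (PForm α)
  I : Act → Set (PForm α)

/-- `⟨a⟩Φ`. -/
def MForm.diam {Act α : Type} (a : Act) (Φ : MForm Act α) : MForm Act α :=
  .not (.box a (.not Φ))

/-- Effect law `A → [a]C`. -/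
def effLaw {Act α : Type} (a : Act) (e : PForm α × PForm α) : MForm Act α :=
  .imp e.1.toM (.box a e.2.toM)

/-- Executability law `A → ⟨a⟩⊤`. -/
def exeLaw {Act α : Type} (a : Act) (A : PForm α) : MForm Act α :=
  .imp A.toM (MForm.diam a (.not .fls))

/-- Inexecutability law `A → [a]⊥`. -/
def inexLaw {Act α : Type} (a : Act) (A : PForm α) : MForm Act α :=
  .imp A.toM (.box a .fls)

variable {Act α : Type}

def staticForms (T : ActionTheory Act α) : Set (MForm Act α) := PForm.toM '' T.S
def effForms (T : ActionTheory Act α) (a : Act) : Set (MForm Act α) := effLaw a '' T.E a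
def exeForms (T : ActionTheory Act α) (a : Act) : Set (MForm Act α) := exeLaw a '' T.X a
def inexForms (T : ActionTheory Act α) (a : Act) : Set (MForm Act α) := inexLaw a '' T.I a

/-- The action theory of the single action `a`:  `S ∪ E_a ∪ X_a ∪ I_a`. -/
def formsFor (T : ActionTheory Act α) (a : Act) : Set (MForm Act α) :=
  staticForms T ∪ effForms T a ∪ exeForms T a ∪ inexForms T a

/-- The whole action theory:  `S ∪ E ∪ X ∪ I`. -/
def allForms (T : ActionTheory Act α) : Set (MForm Act α) :=
  staticForms T ∪ (⋃ a, effForms T a) ∪ (⋃ a, exeForms T a) ∪ (⋃ a, inexForms T a)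

/-- Postulate PS for action `a`: no implicit static laws. -/
def PS (T : ActionTheory Act α) (dep : Dep Act α) (a : Act) : Prop :=
  ∀ φ : PForm α, ConsDep dep (formsFor T a) φ.toM → EntailsCl T.S φ

/-- Postulate PS*: no implicit static laws for the whole theory. -/
def PSstar (T : ActionTheory Act α) (dep : Dep Act α) : Prop :=
  ∀ φ : PForm α, ConsDep dep (allForms T) φ.toM → EntailsCl T.S φ

/-- Postulate PI for action `a`: no implicit inexecutability laws. -/
def PIpost (T : ActionTheory Act α) (dep : Dep Act α) (a : Act) : Prop :=
  ∀ A : PForm α, ConsDep dep (formsFor T a) (inexLaw a A) →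
    ConsK (staticForms T ∪ inexForms T a) (inexLaw a A)

/-- Postulate PI*: no implicit inexecutability laws for the whole theory. -/
def PIstar (T : ActionTheory Act α) (dep : Dep Act α) : Prop :=
  ∀ (a : Act) (A : PForm α), ConsDep dep (allForms T) (inexLaw a A) →
    ConsK (staticForms T ∪ ⋃ a', inexForms T a') (inexLaw a A)

/-! Clauses, prime implicates, new consequences. -/

abbrev Clause (α : Type) := Finset (Lit α)

def Clause.Sat {α : Type} (v : α → Prop) (c : Clause α) : Prop :=
  ∃ l ∈ c, Lit.Sat v l

def EntailsC {α : Type} (Γ : Set (PForm α)) (c : Clause α) : Prop :=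
  ∀ v : α → Prop, (∀ φ ∈ Γ, PForm.Sat v φ) → Clause.Sat v c

def ClEntails {α : Type} (c c' : Clause α) : Prop :=
  ∀ v : α → Prop, Clause.Sat v c → Clause.Sat v c'

/-- Prime implicates of (the conjunction of) `Γ`. -/
def PrimImp {α : Type} (Γ : Set (PForm α)) : Set (Clause α) :=
  {c | EntailsC Γ c ∧ ∀ c' : Clause α, EntailsC Γ c' → ClEntails c' c → ClEntails c c'}

/-- `NewCons(Γ, ψ) = PI(Γ ∧ ψ) \ PI(Γ)`. -/
def NewCons {α : Type} (Γ : Set (PForm α)) (ψ : PForm α) : Set (Clause α) :=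
  PrimImp (Γ ∪ {ψ}) \ PrimImp Γ

def Lit.toForm {α : Type} (l : Lit α) : PForm α :=
  if l.2 then .atom l.1 else .not (.atom l.1)

def Lit.neg {α : Type} (l : Lit α) : Lit α := (l.1, !l.2)

noncomputable def Clause.toForm {α : Type} (c : Clause α) : PForm α :=
  c.toList.foldr (fun l φ => (Lit.toForm l).or φ) .fls

/-- Conjunction of a list of formulas. -/
def conjList {α : Type} (L : List (PForm α)) : PForm α :=
  L.foldr .and (.not .fls)

/-- Frame axioms `¬l → [a]¬l` for literals `l` independent of `a`. -/
def FRA {Act α : Type} (dep : Dep Act α) (a : Act) : Set (MForm Act α) :=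
  { Φ | ∃ l : Lit α, ¬ dep a l ∧
        Φ = .imp ((Lit.neg l).toForm.toM) (.box a ((Lit.neg l).toForm.toM)) }

/-- The candidate implicit inexecutability laws
`(⋀antecedents(Ê) ∧ ¬χ) → [a]⊥` for `Ê ⊆ E_a`,
`χ ∈ NewCons(S, ⋀consequents(Ê))` with all literals of `χ` independent of `a`
and `S`-consistent antecedent. -/
def IMPI {Act α : Type} (T : ActionTheory Act α) (dep : Dep Act α) (a : Act) :
    Set (MForm Act α) :=
  { Φ | ∃ (L : List (PForm α × PForm α)) (χ : Clause α),
      (∀ e ∈ L, e ∈ T.E a) ∧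
      χ ∈ NewCons T.S (conjList (L.map Prod.snd)) ∧
      (∀ l ∈ χ, ¬ dep a l) ∧
      (∃ v : α → Prop, (∀ ψ ∈ T.S, PForm.Sat v ψ) ∧
        PForm.Sat v (conjList (L.map Prod.fst)) ∧ ¬ Clause.Sat v χ) ∧
      Φ = inexLaw a (.and (conjList (L.map Prod.fst)) (.not χ.toForm)) }

/-! Suppose a world `w` satisfies `S`, `E_a`, `I_a`, `IMPI_a` and `A`, and has an `a`-successor.
Let `v` be its valuation and `D` the clause of the `a`-independent literals false at `v`.
The canonical model on the `S`-valuations, whose `a`-transitions respect `E_a`, `I_a`,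
`IMPI_a` and the frame axioms, validates all the premises of the hypothesis; as `A` holds at
`v`, `v` has no successor there. Hence every `S`-valuation satisfying the consequents of the
effect laws active at `v` satisfies `D`. Over finitely many atoms finitely many effect laws
already force `D`, and a minimal subclause `χ ⊆ D` implied by them is a prime implicate,
new since `v` satisfies `S` but not `χ`. The corresponding law of `IMPI_a` is active at `w`,
which contradicts the existence of the successor. -/

theorem PForm.sat_toM (M : KModel Act α) (w : M.W) (φ : PForm α) :
    MForm.Sat M w (φ.toM (Act := Act)) ↔ PForm.Sat (M.V w) φ := by
  induction φ <;> simp [PForm.toM, MForm.Sat, PForm.Sat, *]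

theorem Lit.sat_neg (v : α → Prop) (l : Lit α) : Lit.Sat v l.neg ↔ ¬ Lit.Sat v l := by
  obtain ⟨p, _ | _⟩ := l <;> simp [Lit.Sat, Lit.neg]

theorem Lit.sat_toForm (v : α → Prop) (l : Lit α) : PForm.Sat v l.toForm ↔ Lit.Sat v l := by
  obtain ⟨p, _ | _⟩ := l <;> simp [Lit.Sat, Lit.toForm, PForm.Sat]

theorem Clause.sat_toForm (v : α → Prop) (c : Clause α) :
    PForm.Sat v c.toForm ↔ Clause.Sat v c := by
  have key : ∀ L : List (Lit α),
      PForm.Sat v (L.foldr (fun l φ => l.toForm.or φ) .fls) ↔ ∃ l ∈ L, Lit.Sat v l := by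
    intro L
    induction L <;> simp [PForm.Sat, Lit.sat_toForm, *]
  simp [Clause.toForm, Clause.Sat, key]

theorem sat_conjList (v : α → Prop) (L : List (PForm α)) :
    PForm.Sat v (conjList L) ↔ ∀ φ ∈ L, PForm.Sat v φ := by
  induction L with
  | nil => simp [conjList, PForm.Sat]
  | cons φ L ih => simp only [conjList, List.foldr, PForm.Sat] at ih ⊢; rw [ih]; simp

theorem not_sat_of_glob_inexLaw {M : KModel Act α} {a : Act} {w w' : M.W} (hw : M.R a w w')
    {ψ : PForm α} (h : Glob M (inexLaw a ψ)) : ¬ PForm.Sat (M.V w) ψ :=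
  fun hψ => h w ((PForm.sat_toM M w ψ).2 hψ) w' hw

theorem ClEntails.subset_of_not_sat {c c' : Clause α} (h : ClEntails c c') {v₀ : α → Prop}
    (hc' : ¬ Clause.Sat v₀ c') : c ⊆ c' := by
  classical
  intro l hl
  by_contra hlc'
  -- make `l` true and keep `v₀` elsewhere: only the literal `l.neg ∉ c'` would change value
  let v : α → Prop := Function.update v₀ l.1 (l.2 = true)
  have hvl : Lit.Sat v l := by
    obtain ⟨p, _ | _⟩ := l <;> simp [v, Lit.Sat]
  refine h v ⟨l, hl, hvl⟩ |>.elim fun m ⟨hm, hvm⟩ => hc' ⟨m, hm, ?_⟩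
  obtain ⟨p, b⟩ := m
  by_cases hp : p = l.1
  · subst hp
    obtain ⟨_, b'⟩ := l
    cases b <;> cases b' <;> simp_all [v, Lit.Sat]
  · simpa [v, Lit.Sat, hp] using hvm

theorem EntailsC.exists_primImp_subset {Γ : Set (PForm α)} {D : Clause α} (hD : EntailsC Γ D)
    {v : α → Prop} (hvD : ¬ Clause.Sat v D) : ∃ χ ⊆ D, χ ∈ PrimImp Γ := by
  classical
  obtain ⟨χ, hχ, hmin⟩ := (D.powerset.filter (EntailsC Γ)).exists_min_image Finset.card
    ⟨D, Finset.mem_filter.2 ⟨Finset.mem_powerset_self D, hD⟩⟩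
  obtain ⟨hχpow, hχΓ⟩ := Finset.mem_filter.1 hχ
  have hχD : χ ⊆ D := Finset.mem_powerset.1 hχpow
  refine ⟨χ, hχD, hχΓ, fun c hcΓ hcχ => ?_⟩
  have hcχ' : c ⊆ χ := hcχ.subset_of_not_sat fun ⟨l, hl, hvl⟩ => hvD ⟨l, hχD hl, hvl⟩
  have : c = χ := Finset.eq_of_subset_of_card_le hcχ'
    (hmin c (Finset.mem_filter.2 ⟨Finset.mem_powerset.2 (hcχ'.trans hχD), hcΓ⟩))
  exact this ▸ fun _ => id

theorem EntailsC.exists_list_conjList [Finite α] {β : Type} {S : Set (PForm α)} {P : Set β}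
    {f : β → PForm α} {c : Clause α} (h : EntailsC (S ∪ f '' P) c) :
    ∃ L : List β, (∀ e ∈ L, e ∈ P) ∧ EntailsC (S ∪ {conjList (L.map f)}) c := by
  classical
  have := Fintype.ofFinite (α → Prop)
  have hbad : ∀ u : {u : α → Prop // (∀ φ ∈ S, PForm.Sat u φ) ∧ ¬ Clause.Sat u c},
      ∃ e ∈ P, ¬ PForm.Sat u.1 (f e) := by
    rintro ⟨u, huS, huc⟩
    by_contra! hu
    exact huc (h u fun φ => by rintro (hφ | ⟨e, he, rfl⟩) <;> simp_all)
  choose g hgP hgu using hbad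
  refine ⟨Finset.univ.toList.map g, fun e he => ?_, fun u hu => ?_⟩
  · obtain ⟨u, -, rfl⟩ := List.mem_map.1 he
    exact hgP u
  by_contra huc
  have hconj := (sat_conjList u _).1 (hu _ (Or.inr rfl))
  exact hgu ⟨u, fun φ hφ => hu φ (Or.inl hφ), huc⟩ (hconj _ (by simp))

section CanonicalModel

variable (T : ActionTheory Act α) (dep : Dep Act α) (a : Act)

def IsSuccessor (x y : α → Prop) : Prop :=
  (∀ e ∈ T.E a, PForm.Sat x e.1 → PForm.Sat y e.2) ∧
  (∀ B ∈ T.I a, ¬ PForm.Sat x B) ∧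
  (∀ ψ : PForm α, inexLaw a ψ ∈ IMPI T dep a → ¬ PForm.Sat x ψ) ∧
  (∀ l : Lit α, ¬ dep a l → ¬ Lit.Sat x l → ¬ Lit.Sat y l)

def canonicalModel : KModel Act α where
  W := {u : α → Prop // ∀ φ ∈ T.S, PForm.Sat u φ}
  R _ x y := IsSuccessor T dep a x.1 y.1
  V x := x.1

theorem glob_canonicalModel : ∀ Ψ ∈ staticForms T ∪ effForms T a ∪ inexForms T a ∪
    IMPI T dep a ∪ FRA dep a, Glob (canonicalModel T dep a) Ψ := by
  rintro Ψ ((((⟨φ, hφ, rfl⟩ | ⟨e, he, rfl⟩) | ⟨B, hB, rfl⟩) | hΨ) | ⟨l, hdep, rfl⟩) x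
  · exact (PForm.sat_toM _ x φ).2 (x.2 φ hφ)
  · exact fun hx y hxy => (PForm.sat_toM _ y _).2 (hxy.1 e he ((PForm.sat_toM _ x _).1 hx))
  · exact fun hx y hxy => hxy.2.1 B hB ((PForm.sat_toM _ x _).1 hx)
  · obtain ⟨L, χ, -, -, -, -, rfl⟩ := id hΨ
    exact fun hx y hxy => hxy.2.2.1 _ hΨ ((PForm.sat_toM _ x _).1 hx)
  · intro hx y hxy
    simp only [PForm.sat_toM, Lit.sat_toForm, Lit.sat_neg] at hx ⊢
    exact hxy.2.2.2 l hdep hx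

theorem not_isSuccessor {A : PForm α} (h : ConsK (staticForms T ∪ effForms T a ∪
      inexForms T a ∪ IMPI T dep a ∪ FRA dep a) (inexLaw a A))
    {x y : α → Prop} (hxS : ∀ φ ∈ T.S, PForm.Sat x φ) (hyS : ∀ φ ∈ T.S, PForm.Sat y φ)
    (hxA : PForm.Sat x A) : ¬ IsSuccessor T dep a x y := fun hxy =>
  not_sat_of_glob_inexLaw (M := canonicalModel T dep a) (w := ⟨x, hxS⟩) (w' := ⟨y, hyS⟩) hxy
    (h _ (glob_canonicalModel T dep a)) hxA

open Classical in
noncomputable def frameClause [Fintype α] (v : α → Prop) : Clause α :=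
  Finset.univ.filter fun l => ¬ dep a l ∧ ¬ Lit.Sat v l

theorem mem_frameClause [Fintype α] {v : α → Prop} {l : Lit α} :
    l ∈ frameClause dep a v ↔ ¬ dep a l ∧ ¬ Lit.Sat v l := by
  classical
  simp [frameClause]

theorem exists_active_IMPI [Fintype α] {v : α → Prop} (hvS : ∀ φ ∈ T.S, PForm.Sat v φ)
    (hD : EntailsC (T.S ∪ Prod.snd '' {e | e ∈ T.E a ∧ PForm.Sat v e.1}) (frameClause dep a v)) :
    ∃ ψ, inexLaw a ψ ∈ IMPI T dep a ∧ PForm.Sat v ψ := by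
  have hvD : ¬ Clause.Sat v (frameClause dep a v) := fun ⟨l, hl, hvl⟩ =>
    ((mem_frameClause dep a).1 hl).2 hvl
  obtain ⟨L, hLE, hL⟩ := hD.exists_list_conjList
  obtain ⟨χ, hχD, hχ⟩ := hL.exists_primImp_subset hvD
  have hvχ : ¬ Clause.Sat v χ := fun ⟨l, hl, hvl⟩ => hvD ⟨l, hχD hl, hvl⟩
  have hvL : PForm.Sat v (conjList (L.map Prod.fst)) := by
    simpa [sat_conjList] using fun e he => (hLE e he).2
  refine ⟨_, ⟨L, χ, fun e he => (hLE e he).1, ⟨hχ, fun hS => hvχ (hS.1 v hvS)⟩,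
    fun l hl => ((mem_frameClause dep a).1 (hχD hl)).1, ⟨v, hvS, hvL, hvχ⟩, rfl⟩, hvL, ?_⟩
  exact fun h => hvχ ((Clause.sat_toForm v χ).1 h)

end CanonicalModel

/-- Appendix B, Lemma 2: frame axioms add no inexecutabilities
modulo the implicit inexecutability laws `IMPI_a`. -/
theorem stmt_16 [Fintype α] {Act : Type} (T : ActionTheory Act α) (dep : Dep Act α)
    (a : Act) (A : PForm α)
    (h : ConsK (staticForms T ∪ effForms T a ∪ inexForms T a ∪ IMPI T dep a ∪ FRA dep a)
          (inexLaw a A)) :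
    ConsK (staticForms T ∪ effForms T a ∪ inexForms T a ∪ IMPI T dep a) (inexLaw a A) := by
  intro M hM w hA w' hw'
  have hvS : ∀ φ ∈ T.S, PForm.Sat (M.V w) φ := fun φ hφ =>
    (PForm.sat_toM M w φ).1 (hM _ (Or.inl (Or.inl (Or.inl ⟨φ, hφ, rfl⟩))) w)
  have hD : EntailsC (T.S ∪ Prod.snd '' {e | e ∈ T.E a ∧ PForm.Sat (M.V w) e.1})
      (frameClause dep a (M.V w)) := by
    intro u hu
    by_contra huD
    refine not_isSuccessor T dep a h hvS (fun φ hφ => hu φ (Or.inl hφ))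
      ((PForm.sat_toM M w A).1 hA) ⟨fun e he hve => hu _ (Or.inr ⟨e, ⟨he, hve⟩, rfl⟩),
        fun B hB => not_sat_of_glob_inexLaw hw' (hM _ (Or.inl (Or.inr ⟨B, hB, rfl⟩))),
        fun ψ hψ => not_sat_of_glob_inexLaw hw' (hM _ (Or.inr hψ)), ?_⟩
    exact fun l hl hvl hul => huD ⟨l, (mem_frameClause dep a).2 ⟨hl, hvl⟩, hul⟩
  obtain ⟨ψ, hψ, hvψ⟩ := exists_active_IMPI T dep a hvS hD
  exact not_sat_of_glob_inexLaw hw' (hM _ (Or.inr hψ)) hvψ
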